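/- Let Ω ⊆ ℝⁿ be a nonempty closed convex set, let Ω₁, …, Ω_m ⊆ ℝⁿ be nonempty closed strictly convex sets, let v₁, …, v_m ∈ ℝⁿ be nonzero vectors, and define S₁(x) := max{T_{v_i}(x; Ω_i) : i = 1, …, m}. Suppose Ω ⊆ dom S₁ \ ⋃_{i=1}^m Ω_i. Then the problem of minimizing S₁ over Ω has at most one optimal solution: if x̄, ȳ ∈ Ω both satisfy S₁(x̄) ≤ S₁(x) and S₁(ȳ) ≤ S₁(x) for all x ∈ Ω, then x̄ = ȳ. -/
import Mathlib


open scoped ENNReal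

/-- The directional minimal time function
`T_v(x; Ω) = inf{t ≥ 0 : x + t v ∈ Ω}`, with value `+∞` when no such `t` exists. -/
noncomputable def dirMinTime {n : ℕ} (v : EuclideanSpace ℝ (Fin n))
    (Ω : Set (EuclideanSpace ℝ (Fin n))) (x : EuclideanSpace ℝ (Fin n)) : ℝ≥0∞ :=
  ⨅ (t : ℝ) (_ : 0 ≤ t ∧ x + t • v ∈ Ω), ENNReal.ofReal t

/-- `S₁(x) = max{T_{vᵢ}(x; Ωᵢ) : i = 1, …, m}`. -/
noncomputable def S1 {n m : ℕ} (v : Fin m → EuclideanSpace ℝ (Fin n))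
    (Ω : Fin m → Set (EuclideanSpace ℝ (Fin n))) (x : EuclideanSpace ℝ (Fin n)) : ℝ≥0∞ :=
  ⨆ i, dirMinTime (v i) (Ω i) x

lemma dirMinTime_le {n : ℕ} {v : EuclideanSpace ℝ (Fin n)}
    {Ω : Set (EuclideanSpace ℝ (Fin n))} {x : EuclideanSpace ℝ (Fin n)} {t : ℝ}
    (ht : 0 ≤ t) (hmem : x + t • v ∈ Ω) :
    dirMinTime v Ω x ≤ ENNReal.ofReal t :=
  iInf₂_le t ⟨ht, hmem⟩

/-- Attainment of the minimal time when the target set is closed and the value is finite. -/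
lemma dirMinTime_attained {n : ℕ} {v : EuclideanSpace ℝ (Fin n)}
    {Ω : Set (EuclideanSpace ℝ (Fin n))} {x : EuclideanSpace ℝ (Fin n)}
    (hcl : IsClosed Ω) (hfin : dirMinTime v Ω x ≠ ⊤) :
    ∃ t : ℝ, 0 ≤ t ∧ x + t • v ∈ Ω ∧ ENNReal.ofReal t = dirMinTime v Ω x := by
  set A : Set ℝ := {t : ℝ | 0 ≤ t ∧ x + t • v ∈ Ω} with hA
  have hAne : A.Nonempty := by
    by_contra hAe
    apply hfin
    rw [dirMinTime, iInf_eq_top]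
    intro t
    rw [iInf_eq_top]
    intro ht
    exact absurd (Set.nonempty_def.mpr ⟨t, ht⟩) hAe
  have hAcl : IsClosed A := by
    have h1 : IsClosed {t : ℝ | 0 ≤ t} := isClosed_Ici
    have h2 : IsClosed {t : ℝ | x + t • v ∈ Ω} :=
      hcl.preimage (by continuity : Continuous fun t : ℝ => x + t • v)
    exact h1.inter h2
  have hbdd : BddBelow A := ⟨0, fun t ht => ht.1⟩
  have hmem : sInf A ∈ A := hAcl.csInf_mem hAne hbdd
  refine ⟨sInf A, hmem.1, hmem.2, le_antisymm ?_ (dirMinTime_le hmem.1 hmem.2)⟩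
  rw [dirMinTime]
  exact le_iInf₂ fun t ht => ENNReal.ofReal_le_ofReal (csInf_le hbdd ht)

/-- Let `Ω` be a nonempty closed convex constraint set, `Ω₁, …, Ω_m`
nonempty closed strictly convex target sets, `v₁, …, v_m` nonzero, and suppose
`Ω ⊆ dom S₁ \ ⋃ᵢ Ωᵢ`.  Then the problem of minimizing `S₁` over `Ω` has at most one
optimal solution. -/
theorem stmt_19 {n m : ℕ} (hm : 0 < m) (Om : Set (EuclideanSpace ℝ (Fin n)))
    (hOm : Om.Nonempty) (hOmcl : IsClosed Om) (hOmconv : Convex ℝ Om)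
    (Ω : Fin m → Set (EuclideanSpace ℝ (Fin n)))
    (hne : ∀ i, (Ω i).Nonempty) (hcl : ∀ i, IsClosed (Ω i))
    (hsc : ∀ i, StrictConvex ℝ (Ω i))
    (v : Fin m → EuclideanSpace ℝ (Fin n)) (hv : ∀ i, v i ≠ 0)
    (hsub : Om ⊆ {x | S1 v Ω x ≠ ⊤} \ ⋃ i, Ω i)
    (xbar ybar : EuclideanSpace ℝ (Fin n)) (hx : xbar ∈ Om) (hy : ybar ∈ Om)
    (hxmin : ∀ x ∈ Om, S1 v Ω xbar ≤ S1 v Ω x)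
    (hymin : ∀ x ∈ Om, S1 v Ω ybar ≤ S1 v Ω x) :
    xbar = ybar := by
  by_contra hne'
  haveI : Nonempty (Fin m) := ⟨⟨0, hm⟩⟩
  set z := (1/2 : ℝ) • xbar + (1/2 : ℝ) • ybar with hzdef
  have hzOm : z ∈ Om := hOmconv hx hy (by norm_num) (by norm_num) (by norm_num)
  set μ := S1 v Ω xbar with hμ
  have hμz : μ ≤ S1 v Ω z := hxmin z hzOm
  have hμy : S1 v Ω ybar = μ := le_antisymm (hymin xbar hx) (hxmin ybar hy)
  have hxfin : μ ≠ ⊤ := (hsub hx).1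
  -- choose index attaining the sup at z
  obtain ⟨i, hi⟩ := Finite.exists_max (fun i => dirMinTime (v i) (Ω i) z)
  have hSz : S1 v Ω z = dirMinTime (v i) (Ω i) z := by
    rw [S1]; exact le_antisymm (iSup_le hi) (le_iSup (fun j => dirMinTime (v j) (Ω j) z) i)
  -- bounds at xbar, ybar
  have hTx : dirMinTime (v i) (Ω i) xbar ≤ μ := le_iSup (fun j => dirMinTime (v j) (Ω j) xbar) i
  have hTy : dirMinTime (v i) (Ω i) ybar ≤ μ := by
    rw [← hμy]; exact le_iSup (fun j => dirMinTime (v j) (Ω j) ybar) i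
  have hTxfin : dirMinTime (v i) (Ω i) xbar ≠ ⊤ := fun h => hxfin (top_le_iff.mp (h ▸ hTx))
  have hTyfin : dirMinTime (v i) (Ω i) ybar ≠ ⊤ := fun h => hxfin (top_le_iff.mp (h ▸ hTy))
  obtain ⟨tx, htx0, htxm, htxe⟩ := dirMinTime_attained (hcl i) hTxfin
  obtain ⟨ty, hty0, htym, htye⟩ := dirMinTime_attained (hcl i) hTyfin
  set r := μ.toReal with hr
  have hr0 : 0 ≤ r := ENNReal.toReal_nonneg
  have hμr : μ = ENNReal.ofReal r := (ENNReal.ofReal_toReal hxfin).symm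
  have htxr : tx ≤ r := by
    rw [← ENNReal.ofReal_le_ofReal_iff hr0, htxe, ← hμr]; exact hTx
  have htyr : ty ≤ r := by
    rw [← ENNReal.ofReal_le_ofReal_iff hr0, htye, ← hμr]; exact hTy
  -- the midpoint of the attaining points lies in Ω i
  have hmid : z + ((tx + ty) / 2) • v i ∈ Ω i := by
    have := (hsc i).convex htxm htym (by norm_num : (0:ℝ) ≤ 1/2)
      (by norm_num : (0:ℝ) ≤ 1/2) (by norm_num)
    have heq : (1/2 : ℝ) • (xbar + tx • v i) + (1/2 : ℝ) • (ybar + ty • v i)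
        = z + ((tx + ty) / 2) • v i := by
      rw [hzdef]; module
    rwa [heq] at this
  have hchain : dirMinTime (v i) (Ω i) z ≤ ENNReal.ofReal ((tx + ty) / 2) :=
    dirMinTime_le (by linarith) hmid
  have havg : (tx + ty) / 2 ≤ r := by linarith
  have hμTz : μ ≤ dirMinTime (v i) (Ω i) z := hμz.trans hSz.le
  -- all inequalities are equalities
  have heq1 : ENNReal.ofReal ((tx + ty) / 2) = ENNReal.ofReal r := by
    refine le_antisymm (ENNReal.ofReal_le_ofReal havg) ?_
    rw [← hμr]; exact hμTz.trans hchain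
  have havg' : (tx + ty) / 2 = r := by
    have := (ENNReal.ofReal_eq_ofReal_iff (by linarith) hr0).mp heq1
    linarith
  have htxr' : tx = r := by linarith
  have htyr' : ty = r := by linarith
  -- r > 0 since xbar ∉ Ω i
  have hxnot : xbar ∉ Ω i := fun h => (hsub hx).2 (Set.mem_iUnion.mpr ⟨i, h⟩)
  have hrpos : 0 < r := by
    rcases lt_or_eq_of_le hr0 with h | h
    · exact h
    · exfalso; apply hxnot
      have : xbar + tx • v i = xbar := by rw [htxr', ← h]; simp
      rwa [this] at htxm
  -- strict convexity: the midpoint z + r • v i is interior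
  have hab : xbar + r • v i ≠ ybar + r • v i := by
    intro h; exact hne' (by simpa using congrArg (fun w => w - r • v i) h)
  have hint : (1/2 : ℝ) • (xbar + r • v i) + (1/2 : ℝ) • (ybar + r • v i)
      ∈ interior (Ω i) := by
    rw [htxr'] at htxm; rw [htyr'] at htym
    exact hsc i htxm htym hab (by norm_num) (by norm_num) (by norm_num)
  have hint' : z + r • v i ∈ interior (Ω i) := by
    have heq : (1/2 : ℝ) • (xbar + r • v i) + (1/2 : ℝ) • (ybar + r • v i)
        = z + r • v i := by rw [hzdef]; module
    rwa [heq] at hint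
  -- find a strictly smaller admissible time at z
  have hcont : Continuous fun t : ℝ => z + t • v i := by continuity
  have hU : IsOpen ((fun t : ℝ => z + t • v i) ⁻¹' interior (Ω i)) :=
    isOpen_interior.preimage hcont
  have hrU : r ∈ (fun t : ℝ => z + t • v i) ⁻¹' interior (Ω i) := hint'
  obtain ⟨ε, hε, hball⟩ := Metric.isOpen_iff.mp hU r hrU
  set t := r - min (ε / 2) (r / 2) with htdef
  have h1 : 0 < min (ε / 2) (r / 2) := lt_min (by linarith) (by linarith)
  have h2 : min (ε / 2) (r / 2) ≤ ε / 2 := min_le_left _ _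
  have h3 : min (ε / 2) (r / 2) ≤ r / 2 := min_le_right _ _
  have ht0 : 0 ≤ t := by rw [htdef]; linarith
  have htr : t < r := by rw [htdef]; linarith
  have htball : t ∈ Metric.ball r ε := by
    rw [Metric.mem_ball, Real.dist_eq, htdef]
    have h4 : r - min (ε / 2) (r / 2) - r = -(min (ε / 2) (r / 2)) := by ring
    rw [h4, abs_neg, abs_of_pos h1]
    linarith
  have htmem : z + t • v i ∈ Ω i := interior_subset (hball htball)
  have hlt : dirMinTime (v i) (Ω i) z < μ := by
    calc dirMinTime (v i) (Ω i) z ≤ ENNReal.ofReal t := dirMinTime_le ht0 htmem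
    _ < ENNReal.ofReal r := by
        rw [ENNReal.ofReal_lt_ofReal_iff hrpos]; exact htr
    _ = μ := hμr.symm
  exact absurd (hμTz.trans_lt hlt) (lt_irrefl μ)
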